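/- The pair (α_n, β_n) with α_0 = 1, α_{3r} = q^{(9r^2-3r)/2}(1+q^{3r}) for r>0, α_{3r-1} = -q^{(9r^2-9r)/2+1}, α_{3r+1} = -q^{(9r^2+9r)/2+1}, and β_n = (-1;q^3)_n / ((q;q)_{2n} (-1;q)_n) (with β_0 = 1) forms a Bailey pair relative to a=1; i.e., for all n ≥ 0, β_n = Σ_{r=0}^n α_r / ((q;q)_{n+r} (q;q)_{n-r}). -/

import Mathlib

open Complex

noncomputable def qPoch (a q : ℂ) (n : ℕ) : ℂ := ∏ j ∈ Finset.range n, (1 - a * q ^ j)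

noncomputable def qPochInf (a q : ℂ) : ℂ := ∏' j : ℕ, (1 - a * q ^ j)

noncomputable def alphaBP (q : ℂ) (n : ℕ) : ℂ :=
  if n = 0 then 1
  else if n % 3 = 0 then q ^ ((9 * (n / 3) ^ 2 - 3 * (n / 3)) / 2) * (1 + q ^ n)
  else if n % 3 = 2 then -q ^ ((9 * ((n + 1) / 3) ^ 2 - 9 * ((n + 1) / 3)) / 2 + 1)
  else -q ^ ((9 * (n / 3) ^ 2 + 9 * (n / 3)) / 2 + 1)

/-!
Multiplying by `(q;q)_{2n}` turns the claim into `∑ r, α_r [2n, n-r]_q = (-1;q³)_n / (-1;q)_n`,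
and the right side is `(-ω;q)_n (-ω²;q)_n` for a primitive cube root of unity `ω`.
Gauss's `q`-binomial theorem at `x ↦ -x q⁻ⁿ` gives the finite Jacobi triple product, which expands
`J(x) = (x;q)_n (q/x;q)_n` in the basis `[2n, n ± r]_q` with coefficients `(-x)^{±r} q^{…}`.
In the combination `J(-ω²) - ω J(-ω) = (1 - ω) (-ω;q)_n (-ω²;q)_n` these coefficients depend only
on `r mod 3`, and with the symmetry `[2n, n+r]_q = [2n, n-r]_q` they add up to `(1 - ω) α_r`.
The substitution needs `q ≠ 0`; at `q = 0` both sides are `1`.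
-/

open Finset

namespace Nat

theorem choose_two_add (a b : ℕ) : (a + b).choose 2 = a.choose 2 + b.choose 2 + a * b := by
  induction b with
  | zero => simp
  | succ b ih =>
    rw [← add_assoc, choose_succ_succ', ih, choose_succ_succ', choose_one_right, choose_one_right]
    ring

theorem two_mul_choose_two_add_self (n : ℕ) : 2 * n.choose 2 + n = n * n := by
  induction n with
  | zero => simp
  | succ n ih => rw [choose_succ_succ', choose_one_right]; nlinarith

end Nat

theorem qPoch_succ (a q : ℂ) (n : ℕ) : qPoch a q (n + 1) = qPoch a q n * (1 - a * q ^ n) :=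
  prod_range_succ _ _

theorem qPoch_succ' (a q : ℂ) (n : ℕ) : qPoch a q (n + 1) = (1 - a) * qPoch (a * q) q n := by
  simp only [qPoch, prod_range_succ', pow_succ, pow_zero, mul_one, mul_assoc, mul_comm]

theorem qPoch_add (a q : ℂ) (m n : ℕ) :
    qPoch a q (m + n) = qPoch a q m * qPoch (a * q ^ m) q n := by
  simp only [qPoch, prod_range_add, pow_add, mul_assoc]

theorem qPoch_div_pow {x q : ℂ} (hx : x ≠ 0) (hq : q ≠ 0) (n : ℕ) :
    qPoch (x / q ^ n) q n = (-x) ^ n / q ^ (n + 1).choose 2 * qPoch (q / x) q n := by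
  have hfactor : ∀ r ∈ range n, 1 - x / q ^ n * q ^ (n - 1 - r) =
      -x / q ^ (r + 1) * (1 - q / x * q ^ r) := by
    intro r hr
    have hn : q ^ n = q ^ (n - 1 - r) * q ^ (r + 1) := by
      rw [← pow_add]; congr 1; have := mem_range.mp hr; omega
    rw [hn]
    field_simp
    ring
  have hsum : ∑ r ∈ range n, (r + 1) = (n + 1).choose 2 := by
    rw [Nat.choose_two_right, ← sum_range_id, sum_range_succ', add_zero]
  rw [qPoch, ← prod_range_reflect, prod_congr rfl hfactor, prod_mul_distrib, prod_div_distrib,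
    prod_const, card_range, prod_pow_eq_pow_sum, hsum, qPoch]

theorem qPoch_ne_zero {a q : ℂ} (hq : ‖q‖ < 1) (ha : ‖a‖ ≤ 1) (ha1 : a ≠ 1) (n : ℕ) :
    qPoch a q n ≠ 0 := by
  refine prod_ne_zero_iff.mpr fun j _ h => ?_
  rcases j.eq_zero_or_pos with rfl | hj
  · exact ha1 (by linear_combination -h)
  · have hlt : ‖a * q ^ j‖ < 1 := by
      rw [norm_mul, norm_pow]
      exact lt_of_le_of_lt (mul_le_of_le_one_left (by positivity) ha)
        (pow_lt_one₀ (norm_nonneg _) hq hj.ne')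
    rw [← sub_eq_zero.mp h, norm_one] at hlt
    exact lt_irrefl _ hlt

/-- The Gaussian binomial coefficient `[m, k]_q`, through the `q`-Pascal rule. -/
noncomputable def qBinom (q : ℂ) : ℕ → ℕ → ℂ
  | _, 0 => 1
  | 0, _ + 1 => 0
  | m + 1, k + 1 => q ^ (k + 1) * qBinom q m (k + 1) + qBinom q m k

@[simp] theorem qBinom_zero_right (q : ℂ) (m : ℕ) : qBinom q m 0 = 1 := by cases m <;> rfl

theorem qBinom_succ_succ (q : ℂ) (m k : ℕ) :
    qBinom q (m + 1) (k + 1) = q ^ (k + 1) * qBinom q m (k + 1) + qBinom q m k := rfl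

theorem qBinom_eq_zero_of_lt (q : ℂ) {m k : ℕ} (h : m < k) : qBinom q m k = 0 := by
  induction m generalizing k with
  | zero => obtain ⟨k, rfl⟩ := Nat.exists_eq_add_of_lt h; rfl
  | succ m ih =>
    obtain ⟨k, rfl⟩ := Nat.exists_eq_add_of_le' (Nat.one_le_of_lt h)
    rw [qBinom_succ_succ, ih (by omega), ih (by omega), mul_zero, add_zero]

@[simp] theorem qBinom_self (q : ℂ) (m : ℕ) : qBinom q m m = 1 := by
  induction m with
  | zero => rfl
  | succ m ih =>
    rw [qBinom_succ_succ, qBinom_eq_zero_of_lt q m.lt_succ_self, ih, mul_zero, zero_add]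

theorem qPoch_add_eq_qBinom_mul (q : ℂ) (a b : ℕ) :
    qPoch q q (a + b) = qBinom q (a + b) a * qPoch q q a * qPoch q q b := by
  induction a generalizing b with
  | zero => simp [qPoch]
  | succ a iha =>
    induction b with
    | zero => simp [qPoch]
    | succ b ihb =>
      have h1 := iha (b + 1)
      rw [show a + 1 + b = a + (b + 1) by omega, qPoch_succ q q a] at ihb
      rw [qPoch_succ q q b] at h1
      rw [show a + 1 + (b + 1) = a + (b + 1) + 1 by omega, qBinom_succ_succ, qPoch_succ,
        qPoch_succ q q a, qPoch_succ q q b]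
      linear_combination (q ^ (a + 1) * (1 - q * q ^ b)) * ihb + (1 - q * q ^ a) * h1

theorem qBinom_symm_add {q : ℂ} {a b : ℕ} (ha : qPoch q q a ≠ 0) (hb : qPoch q q b ≠ 0) :
    qBinom q (a + b) a = qBinom q (a + b) b := by
  have h := (qPoch_add_eq_qBinom_mul q a b).symm.trans
    (add_comm a b ▸ qPoch_add_eq_qBinom_mul q b a)
  exact mul_right_cancel₀ hb (mul_right_cancel₀ ha (by linear_combination h))

/-- Gauss's `q`-binomial theorem. -/
theorem prod_one_add_mul_pow_eq_sum (q x : ℂ) (m : ℕ) :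
    ∏ i ∈ range m, (1 + x * q ^ i) =
      ∑ k ∈ range (m + 1), q ^ k.choose 2 * x ^ k * qBinom q m k := by
  induction m generalizing x with
  | zero => simp
  | succ m ih =>
    set h : ℕ → ℂ := fun k => q ^ k.choose 2 * (x * q) ^ k * qBinom q m k
    have hsucc : ∀ k, q ^ (k + 1).choose 2 * x ^ (k + 1) * qBinom q (m + 1) (k + 1) =
        h (k + 1) + x * h k := by
      intro k
      simp only [h, qBinom_succ_succ, Nat.choose_succ_succ', Nat.choose_one_right]
      ring
    have hshift : ∏ i ∈ range m, (1 + x * q ^ (i + 1)) = ∏ i ∈ range m, (1 + x * q * q ^ i) :=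
      prod_congr rfl fun i _ => by ring
    have hfirst : q ^ Nat.choose 0 2 * x ^ 0 * qBinom q (m + 1) 0 = h 0 := by simp [h]
    have hlast : h (m + 1) = 0 := by simp [h, qBinom_eq_zero_of_lt q m.lt_succ_self]
    rw [prod_range_succ', hshift, ih,
      sum_range_succ' (fun k => q ^ k.choose 2 * x ^ k * qBinom q (m + 1) k), funext hsucc,
      sum_add_distrib, ← mul_sum, hfirst, add_right_comm, ← sum_range_succ' h,
      sum_range_succ h (m + 1), hlast, pow_zero, mul_one, add_zero]
    ring

noncomputable def jacobiProd (x q : ℂ) (n : ℕ) : ℂ := qPoch x q n * qPoch (q / x) q n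

/-- The finite Jacobi triple product identity, with the terms of index `n + r` and `n - 1 - r`
of the `[2n, k]_q`-expansion written separately. -/
theorem jacobiProd_eq_sum {x q : ℂ} (hx : x ≠ 0) (hq : q ≠ 0) (n : ℕ) :
    jacobiProd x q n =
      ∑ r ∈ range (n + 1), (-x) ^ r * q ^ r.choose 2 * qBinom q (2 * n) (n + r) +
      ∑ r ∈ range n, (-x⁻¹) ^ (r + 1) * q ^ (r + 2).choose 2 * qBinom q (2 * n) (n - 1 - r) := by
  have hprod : ∏ i ∈ range (2 * n), (1 + -x / q ^ n * q ^ i) = qPoch (x / q ^ n) q (2 * n) :=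
    prod_congr rfl fun i _ => by ring
  have gauss := prod_one_add_mul_pow_eq_sum q (-x / q ^ n) (2 * n)
  rw [hprod, two_mul, qPoch_add, qPoch_div_pow hx hq, div_mul_cancel₀ x (pow_ne_zero n hq),
    show n + n + 1 = n + (n + 1) by omega, sum_range_add, ← sum_range_reflect] at gauss
  set c : ℂ := (-x) ^ n / q ^ (n + 1).choose 2
  have hc : c ≠ 0 := div_ne_zero (pow_ne_zero _ (neg_ne_zero.mpr hx)) (pow_ne_zero _ hq)
  have hpos : ∀ r, q ^ (n + r).choose 2 * (-x / q ^ n) ^ (n + r) * qBinom q (n + n) (n + r) =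
      c * ((-x) ^ r * q ^ r.choose 2 * qBinom q (2 * n) (n + r)) := by
    intro r
    have hexp : (n + r).choose 2 + (n + 1).choose 2 = n * (n + r) + r.choose 2 := by
      rw [Nat.choose_two_add, Nat.choose_succ_succ', Nat.choose_one_right]
      nlinarith [Nat.two_mul_choose_two_add_self n]
    have hpow := congrArg (q ^ ·) hexp
    simp only [pow_add, pow_mul] at hpow
    simp only [c, two_mul, div_pow, pow_add (-x)]
    field_simp
    linear_combination ((-x) ^ n * (-x) ^ r * qBinom q (n + n) (n + r)) * hpow
  have hneg : ∀ r ∈ range n, q ^ (n - 1 - r).choose 2 * (-x / q ^ n) ^ (n - 1 - r) *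
      qBinom q (n + n) (n - 1 - r) =
      c * ((-x⁻¹) ^ (r + 1) * q ^ (r + 2).choose 2 * qBinom q (2 * n) (n - 1 - r)) := by
    intro r hr
    obtain ⟨m, hm⟩ : ∃ m, n = m + (r + 1) := ⟨n - 1 - r, by have := mem_range.mp hr; omega⟩
    have hexp : m.choose 2 + (n + 1).choose 2 = n * m + (r + 2).choose 2 := by
      rw [hm, show m + (r + 1) + 1 = m + (r + 2) by omega, Nat.choose_two_add]
      nlinarith [Nat.two_mul_choose_two_add_self m]
    rw [show n - 1 - r = m by omega]
    have hpow := congrArg (q ^ ·) hexp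
    simp only [pow_add, pow_mul] at hpow
    simp only [c, two_mul, div_pow, ← inv_neg, inv_pow,
      show (-x) ^ n = (-x) ^ m * (-x) ^ (r + 1) by rw [hm, pow_add]]
    field_simp [neg_ne_zero.mpr hx]
    linear_combination qBinom q (n + n) m * hpow
  rw [sum_congr rfl hneg, sum_congr rfl fun r _ => hpos r, ← mul_sum, ← mul_sum] at gauss
  exact mul_left_cancel₀ hc (by rw [jacobiProd]; linear_combination gauss)

theorem IsPrimitiveRoot.sq_add_self_add_one {ω : ℂ} (hω : IsPrimitiveRoot ω 3) :
    ω ^ 2 + ω + 1 = 0 := by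
  have h := hω.geom_sum_eq_zero (by norm_num)
  simp only [sum_range_succ, sum_range_zero, pow_zero, pow_one, zero_add] at h
  linear_combination h

@[simp] theorem alphaBP_zero (q : ℂ) : alphaBP q 0 = 1 := if_pos rfl

section CubeRoot

variable {ω : ℂ} (hω : IsPrimitiveRoot ω 3)
include hω

theorem qPoch_neg_one_pow_three (q : ℂ) (n : ℕ) :
    qPoch (-1) (q ^ 3) n = qPoch (-1) q n * (qPoch (-ω) q n * qPoch (-ω ^ 2) q n) := by
  simp only [qPoch, ← prod_mul_distrib]
  refine prod_congr rfl fun j _ => ?_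
  rw [← pow_mul, mul_comm 3 j, pow_mul]
  linear_combination (-(1 + q ^ j) * q ^ j) * hω.sq_add_self_add_one -
    (1 + q ^ j) * (q ^ j) ^ 2 * hω.pow_eq_one

theorem jacobiProd_neg_sq_sub (q : ℂ) (n : ℕ) :
    jacobiProd (-ω ^ 2) q n - ω * jacobiProd (-ω) q n =
      (1 - ω) * (qPoch (-ω) q n * qPoch (-ω ^ 2) q n) := by
  have hω0 := hω.ne_zero three_ne_zero
  have e1 := (qPoch_succ' (-ω) q n).symm.trans (qPoch_succ (-ω) q n)
  have e2 := (qPoch_succ' (-ω ^ 2) q n).symm.trans (qPoch_succ (-ω ^ 2) q n)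
  have h1 : q / -ω ^ 2 = -ω * q := by field_simp; linear_combination q * hω.pow_eq_one
  have h2 : q / -ω = -ω ^ 2 * q := by field_simp; linear_combination q * hω.pow_eq_one
  rw [jacobiProd, jacobiProd, h1, h2]
  linear_combination (-ω * qPoch (-ω ^ 2) q n) * e1 + qPoch (-ω) q n * e2 +
    (qPoch (-ω ^ 2) q n * qPoch (-ω * q) q n - qPoch (-ω) q n * qPoch (-ω ^ 2 * q) q n) *
      hω.sq_add_self_add_one

theorem one_sub_mul_alphaBP (q : ℂ) {t : ℕ} (ht : t ≠ 0) :
    (1 - ω) * alphaBP q t = ((ω ^ 2) ^ t - ω * ω ^ t) * q ^ t.choose 2 +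
      (ω ^ t - ω * (ω ^ 2) ^ t) * q ^ (t + 1).choose 2 := by
  simp only [← pow_mul, ← pow_succ']
  rw [pow_eq_pow_mod (2 * t) hω.pow_eq_one, pow_eq_pow_mod (t + 1) hω.pow_eq_one,
    pow_eq_pow_mod t hω.pow_eq_one, pow_eq_pow_mod (2 * t + 1) hω.pow_eq_one]
  rcases (by omega : t % 3 = 0 ∨ t % 3 = 1 ∨ t % 3 = 2) with h | h | h
  · obtain ⟨s, rfl⟩ : ∃ s, t = 3 * s := ⟨t / 3, by omega⟩
    have hexp : (9 * s ^ 2 - 3 * s) / 2 = (3 * s).choose 2 := by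
      have h := Nat.two_mul_choose_two_add_self (3 * s)
      ring_nf at h ⊢
      omega
    rw [alphaBP, if_neg ht, if_pos h, Nat.mul_div_cancel_left s three_pos, hexp,
      Nat.choose_succ_succ', Nat.choose_one_right, h, show 2 * (3 * s) % 3 = 0 by omega,
      show (3 * s + 1) % 3 = 1 by omega, show (2 * (3 * s) + 1) % 3 = 1 by omega]
    ring
  · obtain ⟨s, rfl⟩ : ∃ s, t = 3 * s + 1 := ⟨t / 3, by omega⟩
    have hexp : (9 * s ^ 2 + 9 * s) / 2 + 1 = (3 * s + 1 + 1).choose 2 := by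
      have h := Nat.two_mul_choose_two_add_self (3 * s + 2)
      ring_nf at h ⊢
      omega
    rw [alphaBP, if_neg ht, if_neg (by omega), if_neg (by omega),
      show (3 * s + 1) / 3 = s by omega, hexp, h, show 2 * (3 * s + 1) % 3 = 2 by omega,
      show (3 * s + 1 + 1) % 3 = 2 by omega, show (2 * (3 * s + 1) + 1) % 3 = 0 by omega]
    ring
  · obtain ⟨s, rfl⟩ : ∃ s, t = 3 * s + 2 := ⟨t / 3, by omega⟩
    have hexp : (9 * (s + 1) ^ 2 - 9 * (s + 1)) / 2 + 1 = (3 * s + 2).choose 2 := by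
      have h := Nat.two_mul_choose_two_add_self (3 * s + 2)
      ring_nf at h ⊢
      omega
    rw [alphaBP, if_neg ht, if_neg (by omega), if_pos h,
      show (3 * s + 2 + 1) / 3 = s + 1 by omega, hexp, h, show 2 * (3 * s + 2) % 3 = 1 by omega,
      show (3 * s + 2 + 1) % 3 = 0 by omega, show (2 * (3 * s + 2) + 1) % 3 = 2 by omega]
    ring

theorem sum_alphaBP_mul_qBinom {q : ℂ} (hq0 : q ≠ 0) (hq : ∀ m, qPoch q q m ≠ 0) (n : ℕ) :
    ∑ r ∈ range (n + 1), alphaBP q r * qBinom q (2 * n) (n - r) =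
      qPoch (-ω) q n * qPoch (-ω ^ 2) q n := by
  have hω0 := hω.ne_zero three_ne_zero
  have hω1 : 1 - ω ≠ 0 := sub_ne_zero.mpr (hω.ne_one (by norm_num)).symm
  have hinv : ω⁻¹ = ω ^ 2 := by field_simp; linear_combination -hω.pow_eq_one
  have hinv' : (ω ^ 2)⁻¹ = ω := by rw [← hinv, inv_inv]
  have hsymm : ∀ s ∈ range n, qBinom q (2 * n) (n + (s + 1)) = qBinom q (2 * n) (n - 1 - s) := by
    intro s hs
    have h := qBinom_symm_add (hq (n + (s + 1))) (hq (n - 1 - s))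
    rwa [show n + (s + 1) + (n - 1 - s) = 2 * n by have := mem_range.mp hs; omega] at h
  have hterm : ∀ s ∈ range n, (1 - ω) * (alphaBP q (s + 1) * qBinom q (2 * n) (n - (s + 1))) =
      ((ω ^ 2) ^ (s + 1) * q ^ (s + 1).choose 2 * qBinom q (2 * n) (n + (s + 1)) +
        ω ^ (s + 1) * q ^ (s + 2).choose 2 * qBinom q (2 * n) (n - 1 - s)) -
      ω * (ω ^ (s + 1) * q ^ (s + 1).choose 2 * qBinom q (2 * n) (n + (s + 1)) +
        (ω ^ 2) ^ (s + 1) * q ^ (s + 2).choose 2 * qBinom q (2 * n) (n - 1 - s)) := by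
    intro s hs
    rw [hsymm s hs, show n - (s + 1) = n - 1 - s by omega, ← mul_assoc,
      one_sub_mul_alphaBP hω q (t := s + 1) (by omega)]
    ring
  apply mul_left_cancel₀ hω1
  rw [← jacobiProd_neg_sq_sub hω, jacobiProd_eq_sum (neg_ne_zero.mpr (pow_ne_zero 2 hω0)) hq0,
    jacobiProd_eq_sum (neg_ne_zero.mpr hω0) hq0]
  simp only [neg_neg, inv_neg, hinv, hinv']
  rw [mul_sum, sum_range_succ', sum_congr rfl hterm, sum_range_succ' _ n, sum_range_succ' _ n]
  have hchoose0 : Nat.choose 0 2 = 0 := rfl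
  simp only [mul_add, sum_add_distrib, sum_sub_distrib, mul_sum, alphaBP_zero, hchoose0,
    pow_zero, Nat.sub_zero, add_zero]
  ring

end CubeRoot

theorem alphaBP_zero_left {r : ℕ} (hr : r ≠ 0) : alphaBP 0 r = 0 := by
  rw [alphaBP, if_neg hr]
  split_ifs with h3
  · have hs : 3 * (r / 3) + 6 ≤ 9 * (r / 3) ^ 2 := by
      have : 1 ≤ r / 3 := by omega
      nlinarith
    rw [zero_pow (by omega), zero_mul]
  all_goals rw [zero_pow (by omega), neg_zero]

theorem stmt15 (q : ℂ) (hq : ‖q‖ < 1) (n : ℕ) :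
    qPoch (-1) (q ^ 3) n / (qPoch q q (2 * n) * qPoch (-1) q n) =
    ∑ r ∈ Finset.range (n + 1), alphaBP q r / (qPoch q q (n + r) * qPoch q q (n - r)) := by
  have hneg : qPoch (-1) q n ≠ 0 := qPoch_ne_zero hq (by simp) (by norm_num) n
  rcases eq_or_ne q 0 with rfl | hq0
  · have hzero : ∀ m, qPoch 0 0 m = 1 := fun m => by simp [qPoch]
    rw [zero_pow three_ne_zero, hzero, one_mul, div_self hneg, sum_range_succ']
    simp [hzero, alphaBP_zero_left]
  have hω := Complex.isPrimitiveRoot_exp 3 three_ne_zero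
  have hqq : ∀ m, qPoch q q m ≠ 0 :=
    qPoch_ne_zero hq hq.le (by rintro rfl; norm_num at hq)
  have hterm : ∀ r ∈ range (n + 1), alphaBP q r / (qPoch q q (n + r) * qPoch q q (n - r)) =
      alphaBP q r * qBinom q (2 * n) (n - r) / qPoch q q (2 * n) := by
    intro r hr
    rw [div_eq_div_iff (mul_ne_zero (hqq _) (hqq _)) (hqq _),
      show 2 * n = n - r + (n + r) by have := mem_range.mp hr; omega, qPoch_add_eq_qBinom_mul]
    ring
  rw [sum_congr rfl hterm, ← sum_div, sum_alphaBP_mul_qBinom hω hq0 hqq,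
    qPoch_neg_one_pow_three hω, mul_comm (qPoch q q (2 * n)), mul_div_mul_left _ _ hneg]
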